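/- arXiv:1603.02221 — 3 statements merged into one kernel-verified Lean document; each statement's English description precedes it below -/
import Mathlib

section
/- For any finite poset S, any increasing function f : S → S, any up-set Γ ⊆ S, and any x, y ∈ S, the Euclidean inner product ⟨I_f, W^{Γ,x,y}⟩ is nonnegative, where I_f and W^{Γ,x,y} are the vectors in R^{S₂} defined below. -/
open Finset
open scoped Classical

/-- The vector `W^{Γ,x,y}` from the paper, as a function of coordinates `(v,z)`. -/
noncomputable def Wvec {S : Type*} [PartialOrder S] (Γ : Finset S) (x y v z : S) : ℝ :=
  if (x ≤ y ∧ y ∉ Γ ∧ v = y ∧ z ∈ Γ) ∨ (y ≤ x ∧ y ∈ Γ ∧ v = y ∧ z ∉ Γ) then 1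
  else if (x ≤ y ∧ y ∉ Γ ∧ v = x ∧ z ∈ Γ) ∨ (y ≤ x ∧ y ∈ Γ ∧ v = x ∧ z ∉ Γ) then -1
  else 0

/-- The vector `I_f` from the paper: `(I_f)_{x,y} = 1` iff `f x = y`. -/
noncomputable def Ivec {S : Type*} (f : S → S) (x y : S) : ℝ := if f x = y then 1 else 0

/-- `Γ` is an up-set: upward closed. -/
def IsUpSet {S : Type*} [Preorder S] (Γ : Finset S) : Prop :=
  ∀ a b : S, a ∈ Γ → a ≤ b → b ∈ Γ

/-- Euclidean inner product `⟨L, W^{Γ,x,y}⟩` over the off-diagonal coordinates `S₂`. -/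
noncomputable def dotW {S : Type*} [Fintype S] [PartialOrder S]
    (L : S → S → ℝ) (Γ : Finset S) (x y : S) : ℝ :=
  ∑ p ∈ Finset.univ.filter (fun p : S × S => p.1 ≠ p.2), L p.1 p.2 * Wvec Γ x y p.1 p.2

/-- `L` is (the off-diagonal part of) a monotone generator. -/
def IsMonGen {S : Type*} [Fintype S] [PartialOrder S] (L : S → S → ℝ) : Prop :=
  (∀ x y : S, x ≠ y → 0 ≤ L x y) ∧
    ∀ Γ : Finset S, IsUpSet Γ → ∀ x y : S, 0 ≤ dotW L Γ x y

/-- `L` is a completely monotone generator: a nonnegative combination of the `I_f`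
over increasing maps `f`. -/
def IsCMonGen {S : Type*} [Fintype S] [PartialOrder S] (L : S → S → ℝ) : Prop :=
  ∃ Λ : (S → S) → ℝ, (∀ f, 0 ≤ Λ f) ∧ (∀ f, ¬ Monotone f → Λ f = 0) ∧
    ∀ x y : S, x ≠ y → L x y = ∑ f : S → S, Λ f * Ivec f x y

/-!
For an up-set `Γ`, `W^{Γ,x,y}` vanishes on the diagonal, so `⟨I_f, W^{Γ,x,y}⟩ = ∑ v, W(v, f v)`.
For `x ≠ y` this is `1[f y ∈ T] - 1[f x ∈ T]`, where `T` is `Γ` when `x ≤ y ∉ Γ` and the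
complement of `Γ` when `Γ ∋ y ≤ x`; as `f` is monotone and `Γ` (resp. its complement) is an up-set
(resp. down-set), the first indicator dominates the second. For `x = y` only the term
`W(y, f y) ∈ {0, 1}` survives.
-/

/-- Membership in `T`: `W^{Γ,x,y}` is `1` at `(y, z)` and (for `x ≠ y`) `-1` at `(x, z)`
exactly when `z` satisfies this. -/
def IsWTarget {S : Type*} [PartialOrder S] (Γ : Finset S) (x y z : S) : Prop :=
  (x ≤ y ∧ y ∉ Γ ∧ z ∈ Γ) ∨ (y ≤ x ∧ y ∈ Γ ∧ z ∉ Γ)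

section Wvec

variable {S : Type*} [PartialOrder S] {Γ : Finset S} {x y v z : S}

theorem Wvec_of_ne_of_ne (hx : v ≠ x) (hy : v ≠ y) : Wvec Γ x y v z = 0 := by
  simp [Wvec, hx, hy]

theorem Wvec_right : Wvec Γ x y y z = if IsWTarget Γ x y z then 1 else 0 := by
  unfold Wvec IsWTarget
  grind

theorem Wvec_left (hxy : x ≠ y) : Wvec Γ x y x z = -if IsWTarget Γ x y z then 1 else 0 := by
  unfold Wvec IsWTarget
  split_ifs <;> simp_all

theorem IsUpSet.not_isWTarget_left (hΓ : IsUpSet Γ) : ¬ IsWTarget Γ x y x := by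
  rintro (⟨hxy, hy, hx⟩ | ⟨hyx, hy, hx⟩)
  exacts [hy (hΓ x y hx hxy), hx (hΓ y x hy hyx)]

theorem not_isWTarget_right : ¬ IsWTarget Γ x y y := by
  rintro (⟨-, hy, hy'⟩ | ⟨-, hy, hy'⟩)
  exacts [hy hy', hy' hy]

theorem IsUpSet.Wvec_diag (hΓ : IsUpSet Γ) : Wvec Γ x y v v = 0 := by
  by_cases hvy : v = y
  · subst hvy
    simp [Wvec_right, not_isWTarget_right]
  by_cases hvx : v = x
  · subst hvx
    simp [Wvec_left hvy, hΓ.not_isWTarget_left]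
  exact Wvec_of_ne_of_ne hvx hvy

theorem IsUpSet.isWTarget_map {f : S → S} (hΓ : IsUpSet Γ) (hf : Monotone f)
    (h : IsWTarget Γ x y (f x)) : IsWTarget Γ x y (f y) := by
  rcases h with ⟨hxy, hy, hfx⟩ | ⟨hyx, hy, hfx⟩
  · exact Or.inl ⟨hxy, hy, hΓ _ _ hfx (hf hxy)⟩
  · exact Or.inr ⟨hyx, hy, fun hfy => hfx (hΓ _ _ hfy (hf hyx))⟩

end Wvec

theorem sum_offDiag_Ivec_mul {S : Type*} [Fintype S] (f : S → S) (W : S → S → ℝ)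
    (hW : ∀ v, W v v = 0) :
    ∑ p ∈ Finset.univ.filter (fun p : S × S => p.1 ≠ p.2), Ivec f p.1 p.2 * W p.1 p.2 =
      ∑ v, W v (f v) := by
  rw [Finset.sum_filter_of_ne (p := fun p : S × S => p.1 ≠ p.2)
    fun p _ hp h => hp (by rw [h, hW, mul_zero])]
  simp only [Fintype.sum_prod_type, Ivec, ite_mul, one_mul, zero_mul, Finset.sum_ite_eq,
    Finset.mem_univ, if_true]

/-- `⟨I_f, W^{Γ,x,y}⟩ ≥ 0` for increasing `f`, up-set `Γ`, and `x, y ∈ S`. -/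
theorem inner_Ivec_Wvec_nonneg {S : Type*} [Fintype S] [PartialOrder S]
    (f : S → S) (hf : Monotone f) (Γ : Finset S) (hΓ : IsUpSet Γ) (x y : S) :
    0 ≤ ∑ p ∈ Finset.univ.filter (fun p : S × S => p.1 ≠ p.2),
        Ivec f p.1 p.2 * Wvec Γ x y p.1 p.2 := by
  rw [sum_offDiag_Ivec_mul f _ fun v => hΓ.Wvec_diag]
  by_cases hxy : x = y
  · subst hxy
    rw [Fintype.sum_eq_single x fun v hv => Wvec_of_ne_of_ne hv hv, Wvec_right]
    split_ifs <;> norm_num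
  · rw [Fintype.sum_eq_add x y hxy fun v hv => Wvec_of_ne_of_ne hv.1 hv.2, Wvec_left hxy,
      Wvec_right]
    have hmap := hΓ.isWTarget_map (x := x) (y := y) hf
    split_ifs <;> simp_all
end

section
/- On the five-point poset P₁ (the diamond a < b, a < c, b < d, c < d augmented with a bottom element w < a), the generator L₁ defined by L_{a,w} = L_{b,w} = L_{c,w} = L_{d,b} = L_{d,c} = 1 and all other off-diagonal entries 0 satisfies ⟨L₁, W^{Γ,x,y}⟩ ≥ 0 for every up-set Γ and all x ≤ y or x ≥ y in P₁, i.e. L₁ is a monotone generator. -/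
open Finset
open scoped Classical

/-- The five-point poset `P₁`: diamond `a < b,c < d` with bottom element `w < a`. -/
inductive P1 | w | a | b | c | d
  deriving DecidableEq

instance : Fintype P1 :=
  ⟨⟨↑[P1.w, .a, .b, .c, .d], by decide⟩, fun x => by cases x <;> decide⟩

/-- Order on `P₁`, generated by the covering relations `w<a, a<b, a<c, b<d, c<d`. -/
def P1.ble : P1 → P1 → Bool
  | .w, _ => true
  | .a, .a | .a, .b | .a, .c | .a, .d => true
  | .b, .b | .b, .d => true
  | .c, .c | .c, .d => true
  | .d, .d => true
  | _, _ => false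

instance : LE P1 := ⟨fun x y => P1.ble x y⟩
instance : DecidableRel (α := P1) (· ≤ ·) :=
  fun x y => inferInstanceAs (Decidable (P1.ble x y = true))

instance : PartialOrder P1 where
  le_refl := by decide
  le_trans := by decide
  le_antisymm := by decide

/-- The generator `L₁` on `P₁`: rates `L_{a,w}=L_{b,w}=L_{c,w}=L_{d,b}=L_{d,c}=1`. -/
noncomputable def L1 : P1 → P1 → ℝ := fun x y =>
  if (x = .a ∧ y = .w) ∨ (x = .b ∧ y = .w) ∨ (x = .c ∧ y = .w) ∨
     (x = .d ∧ y = .b) ∨ (x = .d ∧ y = .c) then 1 else 0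

/-! Write `r(u, T)` for the total rate at which `L` jumps from `u` into `T`. Then
`⟨L, W^{Γ,x,y}⟩` is `r(y, Γ) - r(x, Γ)` if `x < y ∉ Γ`, is `r(y, Γᶜ) - r(x, Γᶜ)` if `Γ ∋ y < x`, and is
either `0` or a sum of nonnegative rates otherwise. Every jump of `L₁` goes down, so nothing outside
the up-set `Γ` jumps into it and the first difference is `0 - 0`. For the second, when `w ∉ Γ` each
of `a, b, c` leaves `Γ` at rate one (towards `w`) while `d` leaves it at rate `#({b, c} \ Γ)`; but an
up-set containing some `y < d` contains `b` or `c`, so that rate is at most one. -/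

section Monotonicity

variable {S : Type*}

noncomputable def jumpRate (L : S → S → ℝ) (u : S) (T : Finset S) : ℝ :=
  ∑ z ∈ T.erase u, L u z

lemma jumpRate_eq_sum_of_self_eq_zero {L : S → S → ℝ} {u : S} (hu : L u u = 0) (T : Finset S) :
    jumpRate L u T = ∑ z ∈ T, L u z :=
  Finset.sum_erase _ hu

lemma jumpRate_eq_zero_of_notMem [Preorder S] {L : S → S → ℝ} (hdown : ∀ u v, L u v ≠ 0 → v ≤ u)
    {Γ : Finset S} (hΓ : IsUpSet Γ) {u : S} (hu : u ∉ Γ) : jumpRate L u Γ = 0 :=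
  Finset.sum_eq_zero fun z hz => by_contra fun h => hu (hΓ z u (mem_of_mem_erase hz) (hdown u z h))

lemma sum_offDiag_mul_ite_eq_jumpRate [Fintype S] (L : S → S → ℝ) (u : S) (T : Finset S) :
    ∑ p ∈ univ.filter (fun p : S × S => p.1 ≠ p.2),
      L p.1 p.2 * (if p.1 = u ∧ p.2 ∈ T then 1 else 0) = jumpRate L u T := by
  rw [Finset.sum_filter, Fintype.sum_prod_type, jumpRate, ← univ_inter (T.erase u),
    ← Finset.sum_ite_mem, Finset.sum_eq_single u]
  · refine Finset.sum_congr rfl fun z _ => ?_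
    by_cases hz : u = z <;> simp [hz, mem_erase, eq_comm]
  · intro v _ hv
    simp [hv]
  · simp

variable [PartialOrder S] {Γ : Finset S} {x y : S}

lemma IsUpSet.isLowerSet_compl [Fintype S] (hΓ : IsUpSet Γ) : IsLowerSet ((Γᶜ : Finset S) : Set S) :=
  coe_compl Γ ▸ IsUpperSet.compl fun a b hab ha => hΓ a b ha hab

lemma Wvec_self_nonneg (Γ : Finset S) (y v z : S) : 0 ≤ Wvec Γ y y v z := by
  unfold Wvec
  split_ifs <;> norm_num

lemma Wvec_eq_zero (h₁ : ¬(x ≤ y ∧ y ∉ Γ)) (h₂ : ¬(y ≤ x ∧ y ∈ Γ)) (v z : S) :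
    Wvec Γ x y v z = 0 := by
  rw [Wvec, if_neg (by tauto), if_neg (by tauto)]

variable [Fintype S]

lemma dotW_eq_jumpRate_sub (L : S → S → ℝ) (T : Finset S)
    (hW : ∀ v z, Wvec Γ x y v z =
      (if v = y ∧ z ∈ T then 1 else 0) - (if v = x ∧ z ∈ T then 1 else 0)) :
    dotW L Γ x y = jumpRate L y T - jumpRate L x T := by
  simp only [dotW, hW, mul_sub, Finset.sum_sub_distrib, sum_offDiag_mul_ite_eq_jumpRate]

lemma dotW_of_le_of_notMem (L : S → S → ℝ) (hxy : x ≠ y) (hle : x ≤ y) (hy : y ∉ Γ) :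
    dotW L Γ x y = jumpRate L y Γ - jumpRate L x Γ := by
  refine dotW_eq_jumpRate_sub L Γ fun v z => ?_
  have hyx : ¬y ≤ x := fun h => hxy (le_antisymm hle h)
  by_cases hv : v = y <;> by_cases hv' : v = x <;> by_cases hz : z ∈ Γ <;>
    simp [Wvec, hle, hy, hyx, hv, hv', hz, hxy, Ne.symm hxy]

lemma dotW_of_le_of_mem (L : S → S → ℝ) (hxy : x ≠ y) (hle : y ≤ x) (hy : y ∈ Γ) :
    dotW L Γ x y = jumpRate L y Γᶜ - jumpRate L x Γᶜ := by
  refine dotW_eq_jumpRate_sub L Γᶜ fun v z => ?_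
  have hyx : ¬x ≤ y := fun h => hxy (le_antisymm h hle)
  by_cases hv : v = y <;> by_cases hv' : v = x <;> by_cases hz : z ∈ Γ <;>
    simp [Wvec, hle, hy, hyx, hv, hv', hz, hxy, Ne.symm hxy]

theorem dotW_nonneg_of_jumpRate_le {L : S → S → ℝ} (hL : ∀ u v, u ≠ v → 0 ≤ L u v)
    (hin : ∀ x y, x ≤ y → y ∉ Γ → jumpRate L x Γ ≤ jumpRate L y Γ)
    (hout : ∀ x y, y ≤ x → y ∈ Γ → jumpRate L x Γᶜ ≤ jumpRate L y Γᶜ) (x y : S) :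
    0 ≤ dotW L Γ x y := by
  obtain rfl | hxy := eq_or_ne x y
  · exact Finset.sum_nonneg fun p hp =>
      mul_nonneg (hL _ _ (mem_filter.1 hp).2) (Wvec_self_nonneg ..)
  by_cases h₁ : x ≤ y ∧ y ∉ Γ
  · rw [dotW_of_le_of_notMem L hxy h₁.1 h₁.2]
    exact sub_nonneg.2 (hin x y h₁.1 h₁.2)
  by_cases h₂ : y ≤ x ∧ y ∈ Γ
  · rw [dotW_of_le_of_mem L hxy h₂.1 h₂.2]
    exact sub_nonneg.2 (hout x y h₂.1 h₂.2)
  · exact (Finset.sum_eq_zero fun p _ => by rw [Wvec_eq_zero h₁ h₂, mul_zero]).ge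

theorem dotW_nonneg_of_jumpRate_compl_le {L : S → S → ℝ} (hL : ∀ u v, u ≠ v → 0 ≤ L u v)
    (hdown : ∀ u v, L u v ≠ 0 → v ≤ u) (hΓ : IsUpSet Γ)
    (hout : ∀ x y, y ≤ x → y ∈ Γ → jumpRate L x Γᶜ ≤ jumpRate L y Γᶜ) (x y : S) :
    0 ≤ dotW L Γ x y := by
  refine dotW_nonneg_of_jumpRate_le hL (fun x y hle hy => ?_) hout x y
  have hx : x ∉ Γ := fun hx => hy (hΓ x y hx hle)
  rw [jumpRate_eq_zero_of_notMem hdown hΓ hx, jumpRate_eq_zero_of_notMem hdown hΓ hy]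

end Monotonicity

lemma L1_nonneg (u v : P1) : 0 ≤ L1 u v := by
  unfold L1
  split_ifs <;> norm_num

lemma le_of_L1_ne_zero (u v : P1) : L1 u v ≠ 0 → v ≤ u := by
  cases u <;> cases v <;> simp [L1] <;> decide

lemma jumpRate_L1_eq_sum (u : P1) (T : Finset P1) : jumpRate L1 u T = ∑ z ∈ T, L1 u z :=
  jumpRate_eq_sum_of_self_eq_zero (by cases u <;> simp [L1]) T

lemma jumpRate_L1_of_eq_abc {u : P1} (hu : u = .a ∨ u = .b ∨ u = .c) (T : Finset P1) :
    jumpRate L1 u T = if .w ∈ T then 1 else 0 := by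
  rcases hu with rfl | rfl | rfl <;> simp [jumpRate_L1_eq_sum, L1]

lemma jumpRate_L1_d (T : Finset P1) :
    jumpRate L1 .d T = (if .b ∈ T then 1 else 0) + (if .c ∈ T then 1 else 0) := by
  rw [jumpRate_L1_eq_sum, ← Finset.sum_ite_eq' T .b (fun _ => (1 : ℝ)),
    ← Finset.sum_ite_eq' T .c (fun _ => (1 : ℝ)), ← Finset.sum_add_distrib]
  refine Finset.sum_congr rfl fun z _ => ?_
  cases z <;> simp [L1]

lemma jumpRate_L1_le_of_isLowerSet {T : Finset P1} (hT : IsLowerSet (T : Set P1)) {x y : P1}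
    (hle : y ≤ x) (hy : y ∉ T) : jumpRate L1 x T ≤ jumpRate L1 y T := by
  by_cases hw : P1.w ∈ T
  swap
  · have hT_empty : T = ∅ :=
      Finset.eq_empty_of_forall_notMem fun z hz => hw (hT (by cases z <;> decide) hz)
    simp [hT_empty, jumpRate]
  have hout : ∀ z, y ≤ z → z ∉ T := fun z hz hzT => hy (hT hz hzT)
  cases y
  · exact absurd hw hy
  all_goals cases x <;> try exact absurd hle (by decide)
  all_goals
    simp (disch := decide) [hw, hout, jumpRate_L1_of_eq_abc, jumpRate_L1_d]
  all_goals split_ifs <;> norm_num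

/-- `L₁` is a monotone generator on `P₁`. -/
theorem L1_monotone :
    ∀ Γ : Finset P1, IsUpSet Γ → ∀ x y : P1, (x ≤ y ∨ y ≤ x) →
      0 ≤ dotW L1 Γ x y := by
  intro Γ hΓ x y _
  exact dotW_nonneg_of_jumpRate_compl_le (fun u v _ => L1_nonneg u v) le_of_L1_ne_zero hΓ
    (fun _ _ hle hy => jumpRate_L1_le_of_isLowerSet hΓ.isLowerSet_compl hle (by simpa using hy))
    x y
end

section
/- On the five-point poset P₅ (bowtie a, b < c, d with a top element w above c and d), the generator L₅ with L_{w,c} = L_{w,d} = L_{c,a} = L_{d,a} = L_{b,a} = 1 and all other off-diagonal entries zero is monotone but not completely monotone. -/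
open Finset
open scoped Classical

/-- The five-point poset `P₅`: bowtie `a,b < c,d` with a top element `w` above `c,d`. -/
inductive P5 | a | b | c | d | w
  deriving DecidableEq

instance : Fintype P5 := ⟨{.a, .b, .c, .d, .w}, by intro x; cases x <;> simp⟩

/-- Order on `P₅`: `a < c, a < d, b < c, b < d, c < w, d < w`. -/
def P5.ble : P5 → P5 → Bool
  | .a, .a | .a, .c | .a, .d | .a, .w => true
  | .b, .b | .b, .c | .b, .d | .b, .w => true
  | .c, .c | .c, .w => true
  | .d, .d | .d, .w => true
  | .w, .w => true
  | _, _ => false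

instance : LE P5 := ⟨fun x y => P5.ble x y⟩
instance : DecidableRel (α := P5) (· ≤ ·) :=
  fun x y => inferInstanceAs (Decidable (P5.ble x y = true))

instance : PartialOrder P5 where
  le_refl := by decide
  le_trans := by decide
  le_antisymm := by decide

/-- The generator `L₅` on `P₅`: rates `L_{w,c}=L_{w,d}=L_{c,a}=L_{d,a}=L_{b,a}=1`. -/
noncomputable def L5 : P5 → P5 → ℝ := fun x y =>
  if (x = .w ∧ y = .c) ∨ (x = .w ∧ y = .d) ∨ (x = .c ∧ y = .a) ∨
     (x = .d ∧ y = .a) ∨ (x = .b ∧ y = .a) then 1 else 0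

/-!
Monotonicity of `L₅` is a finite check over the eight up-sets of `P₅`.

Suppose `L₅ = ∑ Λ_f I_f`. An increasing `f` with `Λ_f > 0` can only move a point `z` to a
point `f z` with `L₅ z (f z) > 0`. If `f w = c`, then `f d ≤ c` rules out `f d = d`, so
`f d = a`; then `f b ≤ a` rules out `f b = b`, so `f b = a`. The same holds if `f w = d`.
Hence the mass of the jumps `w → c` and `w → d` is at most the mass of the jump `b → a`,
i.e. `L_{w,c} + L_{w,d} ≤ L_{b,a}`, which reads `2 ≤ 1`.
-/

lemma Ivec_nonneg {S : Type*} (f : S → S) (x y : S) : 0 ≤ Ivec f x y := by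
  unfold Ivec; split_ifs <;> norm_num

section CompletelyMonotone

variable {S : Type*} [Fintype S] {L : S → S → ℝ}

lemma weight_le_rate {Λ : (S → S) → ℝ} (hΛ : ∀ f, 0 ≤ Λ f)
    (hrep : ∀ x y : S, x ≠ y → L x y = ∑ f : S → S, Λ f * Ivec f x y)
    (f : S → S) {x : S} (hx : f x ≠ x) : Λ f ≤ L x (f x) := by
  rw [hrep x (f x) hx.symm]
  calc Λ f = Λ f * Ivec f x (f x) := by simp [Ivec]
    _ ≤ ∑ g : S → S, Λ g * Ivec g x (f x) :=
      single_le_sum (fun g _ => mul_nonneg (hΛ g) (Ivec_nonneg g x (f x))) (mem_univ f)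

-- By `weight_le_rate`, only maps moving points along positive rates carry weight.
theorem IsCMonGen.sum_le_of_forall_imp [PartialOrder S] (hL : IsCMonGen L)
    {x x' y' : S} {T : Finset S} (hxT : x ∉ T) (hx' : x' ≠ y')
    (himp : ∀ f : S → S, Monotone f → (∀ z, f z ≠ z → 0 < L z (f z)) → f x ∈ T → f x' = y') :
    ∑ y ∈ T, L x y ≤ L x' y' := by
  obtain ⟨Λ, hΛ, hmono, hrep⟩ := hL
  have hcount : ∀ f : S → S, ∑ y ∈ T, Ivec f x y = if f x ∈ T then 1 else 0 := by
    intro f; simp [Ivec]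
  calc ∑ y ∈ T, L x y = ∑ f : S → S, Λ f * ∑ y ∈ T, Ivec f x y := by
        rw [sum_congr rfl fun y hy => hrep x y (ne_of_mem_of_not_mem hy hxT).symm, sum_comm]
        simp only [mul_sum]
    _ ≤ ∑ f : S → S, Λ f * Ivec f x' y' := sum_le_sum fun f _ => ?_
    _ = L x' y' := (hrep x' y' hx').symm
  rw [hcount]
  split_ifs with hfT
  · rcases (hΛ f).eq_or_lt with h0 | hpos
    · simp [← h0]
    have hm : Monotone f := of_not_not fun hnm => hpos.ne' (hmono f hnm)
    have hsupp : ∀ z, f z ≠ z → 0 < L z (f z) :=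
      fun z hz => hpos.trans_le (weight_le_rate hΛ hrep f hz)
    simp [Ivec, himp f hm hsupp hfT]
  · simpa using mul_nonneg (hΛ f) (Ivec_nonneg f x' y')

end CompletelyMonotone

lemma dotW_eq_sum_sum {S : Type*} [Fintype S] [PartialOrder S] (L : S → S → ℝ)
    (Γ : Finset S) (x y : S) :
    dotW L Γ x y = ∑ v : S, ∑ z : S, if v = z then 0 else L v z * Wvec Γ x y v z := by
  rw [dotW, sum_filter, Fintype.sum_prod_type]
  refine sum_congr rfl fun v _ => sum_congr rfl fun z _ => ?_
  by_cases h : v = z <;> simp [h]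

namespace P5

lemma sum_univ_eq (g : P5 → ℝ) : ∑ v, g v = g .a + g .b + g .c + g .d + g .w := by
  rw [show (univ : Finset P5) = {.a, .b, .c, .d, .w} from rfl]
  simp only [sum_insert, mem_insert, mem_singleton, reduceCtorEq, or_self, not_false_eq_true,
    sum_singleton]
  ring

lemma isUpSet_cases (Γ : Finset P5) (h : IsUpSet Γ) :
    Γ = ∅ ∨ Γ = {.w} ∨ Γ = {.c, .w} ∨ Γ = {.d, .w} ∨ Γ = {.c, .d, .w} ∨
    Γ = {.a, .c, .d, .w} ∨ Γ = {.b, .c, .d, .w} ∨ Γ = {.a, .b, .c, .d, .w} := by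
  unfold IsUpSet at h; revert Γ; decide

lemma eq_a_of_L5_pos {z y : P5} (hz : z ≠ .w) (hzy : z ≠ y) (h : 0 < L5 z y) : y = .a := by
  cases z <;> cases y <;> simp_all [L5]

lemma apply_b_eq_a {f : P5 → P5} (hm : Monotone f) (hf : ∀ z, f z ≠ z → 0 < L5 z (f z))
    (hw : f .w ∈ ({.c, .d} : Finset P5)) : f .b = .a := by
  -- `t` is the point of `{c, d}` not below `f w`
  obtain ⟨t, htw, hlt, hbt, hnt⟩ : ∃ t : P5, t ≠ .w ∧ t ≤ .w ∧ .b ≤ t ∧ ¬ t ≤ f .w := by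
    rcases mem_insert.1 hw with h | h
    · exact ⟨.d, by decide, by decide, by decide, by rw [h]; decide⟩
    · exact ⟨.c, by decide, by decide, by decide, by rw [mem_singleton.1 h]; decide⟩
  have hft_ne : f t ≠ t := fun h => hnt (h ▸ hm hlt)
  have hft : f t = .a := eq_a_of_L5_pos htw (Ne.symm hft_ne) (hf t hft_ne)
  have hfb : f .b ≠ .b := fun h => absurd (h ▸ hft ▸ hm hbt) (by decide)
  exact eq_a_of_L5_pos (by decide) (Ne.symm hfb) (hf .b hfb)

end P5

theorem L5_isMonGen : IsMonGen L5 := by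
  refine ⟨fun x y _ => by unfold L5; split_ifs <;> norm_num, fun Γ hΓ x y => ?_⟩
  rcases P5.isUpSet_cases Γ hΓ with h | h | h | h | h | h | h | h <;> subst h <;>
    fin_cases x <;> fin_cases y <;>
      simp +decide [dotW_eq_sum_sum, P5.sum_univ_eq, Wvec, L5]

theorem L5_not_isCMonGen : ¬ IsCMonGen L5 := by
  intro hL
  have h := hL.sum_le_of_forall_imp (x := .w) (T := {.c, .d}) (x' := .b) (y' := .a)
    (by decide) (by decide) fun f hm hf hw => P5.apply_b_eq_a hm hf hw
  rw [sum_pair (by decide)] at h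
  norm_num [L5] at h

/-- `L₅` is monotone but not completely monotone on `P₅`. -/
theorem L5_mon_not_cmon : IsMonGen L5 ∧ ¬ IsCMonGen L5 :=
  ⟨L5_isMonGen, L5_not_isCMonGen⟩
end
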